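/- Under the hierarchical RG transformation F ↦ F' with L^d = 2, F'(φ) = ∫ dμ_γ(ζ) F(ζ+βφ)², the coefficients of the expansion F(φ) = Σ_{l≥0} (a_l/γ̄^l) :φ^{2l}:_{γ̄} transform as a_l ↦ a'_l = β^{2l} Σ_{m,n} C_l^{mn} a_m a_n, where C_l^{mn} = (2m)!(2n)!/((m+n−l)!(l+n−m)!(l+m−n)!) and the sum is restricted to |m−n| ≤ l ≤ m+n. -/

import Mathlib

open Real MeasureTheory Finset

/-- Physicists' Hermite polynomials: `H 0 = 1`, `H 1 x = 2x`,
`H (n+2) x = 2x H (n+1) x - 2(n+1) H n x`. -/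
noncomputable def hermiteP : ℕ → ℝ → ℝ
  | 0, _ => 1
  | 1, x => 2 * x
  | (n + 2), x => 2 * x * hermiteP (n + 1) x - 2 * (n + 1) * hermiteP n x

/-- Wick ordered power `:φ^n:_{γ̄} = (γ̄/2)^{n/2} H_n(φ/√(2γ̄))`. -/
noncomputable def wick (gb : ℝ) (n : ℕ) (φ : ℝ) : ℝ :=
  (gb / 2) ^ ((n : ℝ) / 2) * hermiteP n (φ / Real.sqrt (2 * gb))

/-- The structure coefficients `C_l^{mn}` of the Wick product expansion. -/
noncomputable def Ccoef (l m n : ℕ) : ℝ :=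
  if m ≤ n + l ∧ n ≤ m + l ∧ l ≤ m + n then
    (Nat.factorial (2 * m) : ℝ) * (Nat.factorial (2 * n)) /
      ((Nat.factorial (m + n - l)) * (Nat.factorial (l + n - m)) *
        (Nat.factorial (l + m - n)))
  else 0

/-!
Write the Wick power `:x^n:_c` as the explicit polynomial
`wickPoly c n x = Σ_k (-c)^k · #{k-pairings of n points} · x^(n-2k)`, which makes sense for every
real variance `c`. Three facts drive the argument.

* The Wick product formula `:x^p: :x^q: = Σ_k k! C(p,k) C(q,k) c^k :x^(p+q-2k):`, proved by
  induction from the three-term recurrence, turns `F²` into a Wick series whose coefficients are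
  the `Ccoef`.
* Gaussian convolution lowers the variance: `∫ dμ_γ(ζ) :(ζ+x)^n:_c = :x^n:_(c-γ)`. Indeed Wick
  powers compose additively in the variance, and the Gaussian moments of `(ζ+x)^m` are the Wick
  powers `:x^m:_(-γ)`.
* Scaling: `:(βx)^n:_(cβ²) = βⁿ :x^n:_c`. The choice `γ̄ = γ/(1-β²)` means `γ̄ - γ = γ̄ β²`, so
  the Gaussian step maps `:(βφ)^(2l):_γ̄` to `β^(2l) :φ^(2l):_γ̄`.
-/

section

open scoped Nat

/-- The number of ways to choose `k` disjoint pairs among `n` points. -/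
def wickCoeff (n k : ℕ) : ℕ := n.choose (2 * k) * (2 * k - 1)‼

lemma factorial_two_mul_eq (k : ℕ) : (2 * k)! = 2 ^ k * k ! * (2 * k - 1)‼ := by
  rcases k with _ | k
  · rfl
  · rw [show 2 * (k + 1) = 2 * k + 1 + 1 by ring, Nat.factorial_eq_mul_doubleFactorial,
      show 2 * k + 1 + 1 = 2 * (k + 1) by ring, Nat.doubleFactorial_two_mul,
      show 2 * (k + 1) - 1 = 2 * k + 1 by omega]

lemma wickCoeff_eq_factorial_div {n k : ℕ} (h : 2 * k ≤ n) :
    (wickCoeff n k : ℝ) = n ! / (2 ^ k * k ! * (n - 2 * k)!) := by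
  have h2k : ((2 * k)! : ℝ) = 2 ^ k * k ! * (2 * k - 1)‼ := by exact_mod_cast factorial_two_mul_eq k
  rw [wickCoeff, Nat.cast_mul, Nat.cast_choose ℝ h, h2k]
  field_simp

lemma wickCoeff_of_lt {n k : ℕ} (h : n < 2 * k) : wickCoeff n k = 0 := by
  simp [wickCoeff, Nat.choose_eq_zero_of_lt h]

@[simp]
lemma wickCoeff_zero_right (n : ℕ) : wickCoeff n 0 = 1 := by
  simp [wickCoeff]

lemma wickCoeff_succ_succ (n k : ℕ) :
    wickCoeff (n + 2) (k + 1) = wickCoeff (n + 1) (k + 1) + (n + 1) * wickCoeff n k := by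
  have h := Nat.add_one_mul_choose_eq n (2 * k)
  simp only [wickCoeff, show 2 * (k + 1) = 2 * k + 1 + 1 by ring, Nat.choose_succ_succ' (n + 1),
    Nat.doubleFactorial_add_one, Nat.add_sub_cancel]
  rw [show (n + 1) * (n.choose (2 * k) * (2 * k - 1)‼) = (n + 1) * n.choose (2 * k) * (2 * k - 1)‼
    by ring, h]
  ring

lemma wickCoeff_mul_wickCoeff (p k s : ℕ) :
    wickCoeff p k * wickCoeff (p - 2 * k) s = (k + s).choose k * wickCoeff p (k + s) := by
  by_cases h : 2 * (k + s) ≤ p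
  · suffices (wickCoeff p k * wickCoeff (p - 2 * k) s : ℝ)
        = (k + s).choose k * wickCoeff p (k + s) by exact_mod_cast this
    rw [wickCoeff_eq_factorial_div (by omega), wickCoeff_eq_factorial_div (by omega),
      wickCoeff_eq_factorial_div h, Nat.cast_choose ℝ (by omega : k ≤ k + s),
      show k + s - k = s by omega, show p - 2 * k - 2 * s = p - 2 * (k + s) by omega]
    field_simp
    ring
  · rw [wickCoeff_of_lt (by omega : p < 2 * (k + s))]
    by_cases hk : 2 * k ≤ p
    · rw [wickCoeff_of_lt (by omega : p - 2 * k < 2 * s), mul_zero, mul_zero]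
    · rw [wickCoeff_of_lt (by omega : p < 2 * k), zero_mul, mul_zero]

/-- The Wick power `:x^n:` for variance `c`, written as a polynomial jointly in `x` and `c`
so that it makes sense for every `c : ℝ`; for `c > 0` it is `c^{n/2} He_n(x/√c)`. -/
noncomputable def wickPoly (c : ℝ) (n : ℕ) (x : ℝ) : ℝ :=
  ∑ k ∈ range (n + 1), (-c) ^ k * wickCoeff n k * x ^ (n - 2 * k)

@[simp]
lemma wickPoly_zero (c x : ℝ) : wickPoly c 0 x = 1 := by
  simp [wickPoly]

@[simp]
lemma wickPoly_one (c x : ℝ) : wickPoly c 1 x = x := by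
  simp [wickPoly, sum_range_succ, wickCoeff_of_lt]

lemma wickPoly_succ_succ (c x : ℝ) (n : ℕ) :
    wickPoly c (n + 2) x = x * wickPoly c (n + 1) x - (n + 1) * c * wickPoly c n x := by
  have hx : x * wickPoly c (n + 1) x = ∑ k ∈ range (n + 1),
      (-c) ^ (k + 1) * wickCoeff (n + 1) (k + 1) * x ^ (n - 2 * k) + x ^ (n + 2) := by
    rw [wickPoly, mul_sum, sum_range_succ']
    congr 1
    · refine sum_congr rfl fun k _ => ?_
      by_cases h : 2 * (k + 1) ≤ n + 1
      · rw [show n - 2 * k = n + 1 - 2 * (k + 1) + 1 by omega, pow_succ]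
        ring
      · rw [wickCoeff_of_lt (by omega)]
        ring
    · simp only [wickCoeff_zero_right, pow_zero, mul_zero, Nat.sub_zero]
      ring
  have hc : (n + 1) * c * wickPoly c n x = - ∑ k ∈ range (n + 1),
      (-c) ^ (k + 1) * ((n + 1) * wickCoeff n k) * x ^ (n - 2 * k) := by
    rw [wickPoly, mul_sum, ← sum_neg_distrib]
    refine sum_congr rfl fun k _ => ?_
    ring
  rw [hx, hc, wickPoly, sum_range_succ', sum_range_succ,
    wickCoeff_of_lt (by omega : n + 2 < 2 * (n + 1 + 1))]
  push_cast [wickCoeff_succ_succ, mul_add, add_mul, sum_add_distrib]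
  simp only [mul_zero, pow_zero, wickCoeff_zero_right]
  ring

lemma mul_wickPoly (c x : ℝ) (n : ℕ) :
    x * wickPoly c n x = wickPoly c (n + 1) x + n * c * wickPoly c (n - 1) x := by
  rcases n with _ | n
  · simp
  · rw [wickPoly_succ_succ]
    push_cast
    ring

lemma wickPoly_mul_sq_mul (c b : ℝ) (n : ℕ) (x : ℝ) :
    wickPoly (c * b ^ 2) n (b * x) = b ^ n * wickPoly c n x := by
  induction n using Nat.twoStepInduction with
  | zero => simp
  | one => simp
  | more n ih₀ ih₁ =>
    rw [wickPoly_succ_succ, wickPoly_succ_succ, ih₀, ih₁]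
    ring

lemma wick_eq_sqrt_pow_mul {g : ℝ} (hg : 0 ≤ g) (n : ℕ) (x : ℝ) :
    wick g n x = √(g / 2) ^ n * hermiteP n (x / (2 * √(g / 2))) := by
  have hsqrt : √(2 * g) = 2 * √(g / 2) := by
    rw [show 2 * g = 2 ^ 2 * (g / 2) by ring, Real.sqrt_mul (by positivity),
      Real.sqrt_sq zero_le_two]
  rw [wick, hsqrt, Real.sqrt_eq_rpow, ← Real.rpow_natCast, ← Real.rpow_mul (by positivity)]
  ring_nf

lemma wick_eq_wickPoly {g : ℝ} (hg : 0 < g) (n : ℕ) (x : ℝ) : wick g n x = wickPoly g n x := by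
  rw [wick_eq_sqrt_pow_mul hg.le]
  set s := √(g / 2)
  have hs : s ≠ 0 := (Real.sqrt_pos.2 (by positivity)).ne'
  have hs2 : g = 2 * s ^ 2 := by rw [Real.sq_sqrt (by positivity)]; ring
  obtain ⟨y, rfl⟩ : ∃ y, x = 2 * s * y := ⟨x / (2 * s), by field_simp⟩
  rw [show 2 * s * y / (2 * s) = y by field_simp]
  induction n using Nat.twoStepInduction with
  | zero => simp [hermiteP]
  | one => simp only [hermiteP, wickPoly_one]; ring
  | more n ih₀ ih₁ =>
    rw [hermiteP, wickPoly_succ_succ, ← ih₀, ← ih₁, hs2]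
    ring

/-- The number of ways to pair `k` of `p` points with `k` of `q` other points. -/
def wickContractions (p q k : ℕ) : ℕ := k ! * p.choose k * q.choose k

lemma wickContractions_of_left_lt {p q k : ℕ} (h : p < k) : wickContractions p q k = 0 := by
  simp [wickContractions, Nat.choose_eq_zero_of_lt h]

lemma wickContractions_of_right_lt {p q k : ℕ} (h : q < k) : wickContractions p q k = 0 := by
  simp [wickContractions, Nat.choose_eq_zero_of_lt h]

lemma wickContractions_of_lt {p q k : ℕ} (h : p + q < 2 * k) : wickContractions p q k = 0 := by
  rcases lt_or_ge p k with hp | hp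
  · exact wickContractions_of_left_lt hp
  · exact wickContractions_of_right_lt (by omega)

lemma wickContractions_succ_succ (p q i : ℕ) :
    (wickContractions (p + 2) q (i + 1) : ℝ) = wickContractions (p + 1) q (i + 1)
      + (p + 1 + q - 2 * i : ℕ) * wickContractions (p + 1) q i
      - (p + 1) * wickContractions p q i := by
  rcases lt_or_ge q i with hq | hq
  · simp [wickContractions_of_right_lt, hq, hq.trans (Nat.lt_succ_self i)]
  rcases lt_or_ge (p + 1) i with hp | hp
  · simp [wickContractions_of_left_lt, hp, (Nat.lt_succ_self p).trans hp,
      show p + 2 < i + 1 by omega]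
  have hpascal : ((p + 2).choose (i + 1) : ℝ) = (p + 1).choose i + (p + 1).choose (i + 1) := by
    exact_mod_cast Nat.choose_succ_succ' (p + 1) i
  have hp' : ((p + 1 : ℕ) : ℝ) * p.choose i = (p + 1).choose i * (p + 1 - i : ℕ) := by
    exact_mod_cast (Nat.add_one_mul_choose_eq p i).trans (Nat.choose_succ_right_eq (p + 1) i)
  have hq' : (q.choose (i + 1) : ℝ) * (i + 1 : ℕ) = q.choose i * (q - i : ℕ) := by
    exact_mod_cast Nat.choose_succ_right_eq q i
  simp only [wickContractions, Nat.factorial_succ]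
  push_cast [Nat.cast_sub hp, Nat.cast_sub hq, Nat.cast_sub (by omega : 2 * i ≤ p + 1 + q)]
    at hp' hq' ⊢
  linear_combination ((i + 1) * i ! * q.choose (i + 1) : ℝ) * hpascal
    + (i ! * (p + 1).choose i : ℝ) * hq' + (i ! * q.choose i : ℝ) * hp'

lemma mul_sum_wickContractions_succ (c x : ℝ) (p q : ℕ) :
    x * ∑ k ∈ range (p + 2),
        (wickContractions (p + 1) q k : ℝ) * c ^ k * wickPoly c (p + 1 + q - 2 * k) x
      = ∑ k ∈ range (p + 2),
          (wickContractions (p + 1) q k : ℝ) * c ^ k * wickPoly c (p + 2 + q - 2 * k) x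
        + ∑ k ∈ range (p + 2), ((p + 1 + q - 2 * k : ℕ) * wickContractions (p + 1) q k : ℝ)
          * c ^ (k + 1) * wickPoly c (p + q - 2 * k) x := by
  rw [mul_sum, ← sum_add_distrib]
  refine sum_congr rfl fun k _ => ?_
  rcases le_or_gt (2 * k) (p + 1 + q) with hk | hk
  · rw [← mul_left_comm, mul_wickPoly, show p + 1 + q - 2 * k + 1 = p + 2 + q - 2 * k by omega,
      show p + 1 + q - 2 * k - 1 = p + q - 2 * k by omega]
    ring
  · simp [wickContractions_of_lt hk]

lemma sum_wickContractions_succ_succ (c x : ℝ) (p q : ℕ) :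
    ∑ k ∈ range (p + 3),
        (wickContractions (p + 2) q k : ℝ) * c ^ k * wickPoly c (p + 2 + q - 2 * k) x
      = x * ∑ k ∈ range (p + 2),
          (wickContractions (p + 1) q k : ℝ) * c ^ k * wickPoly c (p + 1 + q - 2 * k) x
        - (p + 1) * c * ∑ k ∈ range (p + 1),
          (wickContractions p q k : ℝ) * c ^ k * wickPoly c (p + q - 2 * k) x := by
  have hL : ∑ k ∈ range (p + 3),
        (wickContractions (p + 2) q k : ℝ) * c ^ k * wickPoly c (p + 2 + q - 2 * k) x
      = wickPoly c (p + 2 + q) x + ∑ k ∈ range (p + 2),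
          (wickContractions (p + 2) q (k + 1) : ℝ) * c ^ (k + 1)
            * wickPoly c (p + q - 2 * k) x := by
    rw [sum_range_succ', add_comm]
    simp [wickContractions, show ∀ k, p + 2 + q - 2 * (k + 1) = p + q - 2 * k from
      fun k => by omega]
  have hA : ∑ k ∈ range (p + 2),
        (wickContractions (p + 1) q k : ℝ) * c ^ k * wickPoly c (p + 2 + q - 2 * k) x
      = wickPoly c (p + 2 + q) x + ∑ k ∈ range (p + 2),
          (wickContractions (p + 1) q (k + 1) : ℝ) * c ^ (k + 1)
            * wickPoly c (p + q - 2 * k) x := by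
    rw [sum_range_succ', add_comm, sum_range_succ _ (p + 1),
      wickContractions_of_left_lt (by omega : p + 1 < p + 1 + 1)]
    simp [wickContractions, show ∀ k, p + 2 + q - 2 * (k + 1) = p + q - 2 * k from
      fun k => by omega]
  have hB : (p + 1) * c * ∑ k ∈ range (p + 1),
        (wickContractions p q k : ℝ) * c ^ k * wickPoly c (p + q - 2 * k) x
      = ∑ k ∈ range (p + 2),
          ((p + 1) * wickContractions p q k : ℝ) * c ^ (k + 1) * wickPoly c (p + q - 2 * k) x := by
    rw [sum_range_succ _ (p + 1), wickContractions_of_left_lt (by omega : p < p + 1), mul_sum]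
    simp only [Nat.cast_zero, mul_zero, zero_mul, add_zero]
    refine sum_congr rfl fun k _ => ?_
    ring
  rw [mul_sum_wickContractions_succ, hL, hA, hB, add_sub_assoc, ← sum_sub_distrib,
    add_assoc (wickPoly c (p + 2 + q) x), ← sum_add_distrib]
  congr 1
  refine sum_congr rfl fun k _ => ?_
  rw [wickContractions_succ_succ]
  ring

theorem wickPoly_mul_wickPoly (c x : ℝ) (p q : ℕ) :
    wickPoly c p x * wickPoly c q x
      = ∑ k ∈ range (p + 1),
          (wickContractions p q k : ℝ) * c ^ k * wickPoly c (p + q - 2 * k) x := by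
  induction p using Nat.twoStepInduction with
  | zero => simp [wickContractions]
  | one =>
    rw [wickPoly_one, mul_wickPoly]
    simp [sum_range_succ, wickContractions, add_comm 1 q]
  | more p ih₀ ih₁ =>
    rw [sum_wickContractions_succ_succ, ← ih₀, ← ih₁, wickPoly_succ_succ]
    ring

lemma Ccoef_eq_wickContractions {l m n : ℕ} (h : l ≤ m + n) :
    Ccoef l m n = wickContractions (2 * m) (2 * n) (m + n - l) := by
  by_cases htri : m ≤ n + l ∧ n ≤ m + l
  · rw [Ccoef, if_pos ⟨htri.1, htri.2, h⟩, wickContractions]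
    push_cast
    rw [Nat.cast_choose ℝ (by omega : m + n - l ≤ 2 * m),
      Nat.cast_choose ℝ (by omega : m + n - l ≤ 2 * n),
      show 2 * m - (m + n - l) = l + m - n by omega, show 2 * n - (m + n - l) = l + n - m by omega]
    field_simp
  · rw [Ccoef, if_neg (by tauto)]
    rcases not_and_or.1 htri with hm | hn
    · rw [wickContractions_of_right_lt (by omega)]; simp
    · rw [wickContractions_of_left_lt (by omega)]; simp

theorem wickPoly_two_mul_mul_two_mul (c x : ℝ) (m n : ℕ) :
    wickPoly c (2 * m) x * wickPoly c (2 * n) x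
      = ∑ l ∈ range (m + n + 1), Ccoef l m n * c ^ (m + n - l) * wickPoly c (2 * l) x := by
  set f : ℕ → ℝ := fun k =>
    (wickContractions (2 * m) (2 * n) k : ℝ) * c ^ k * wickPoly c (2 * m + 2 * n - 2 * k) x
  have hf : ∀ k, m + n < k → f k = 0 := fun k hk => by
    simp [f, wickContractions_of_lt (by omega : 2 * m + 2 * n < 2 * k)]
  calc wickPoly c (2 * m) x * wickPoly c (2 * n) x
      = ∑ k ∈ range (2 * m + 1), f k := wickPoly_mul_wickPoly c x _ _
    _ = ∑ k ∈ range (2 * m + 2 * n + 1), f k :=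
        sum_subset (range_subset_range.2 (by omega)) fun k _ hk => by
          simp [f, wickContractions_of_left_lt (by simp at hk; omega : 2 * m < k)]
    _ = ∑ k ∈ range (m + n + 1), f k :=
        (sum_subset (range_subset_range.2 (by omega)) fun k _ hk =>
          hf k (by simp at hk; omega)).symm
    _ = ∑ l ∈ range (m + n + 1), f (m + n - l) := (sum_range_reflect f _).symm
    _ = _ := sum_congr rfl fun l hl => by
        rw [mem_range] at hl
        rw [Ccoef_eq_wickContractions (by omega)]
        simp only [f, show 2 * m + 2 * n - 2 * (m + n - l) = 2 * l by omega]

lemma Ccoef_of_lt {l m n : ℕ} (h : m + n < l) : Ccoef l m n = 0 :=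
  if_neg fun h' => by omega

theorem sq_sum_wickPoly_two_mul {c : ℝ} (hc : c ≠ 0) (N : ℕ) (a : ℕ → ℝ) (x : ℝ) :
    (∑ m ∈ range (N + 1), a m / c ^ m * wickPoly c (2 * m) x) ^ 2
      = ∑ l ∈ range (2 * N + 1),
          (∑ m ∈ range (N + 1), ∑ n ∈ range (N + 1), Ccoef l m n * a m * a n) / c ^ l
            * wickPoly c (2 * l) x := by
  simp only [sum_div, sum_mul]
  rw [sq, sum_mul_sum]
  symm
  rw [sum_comm]
  refine sum_congr rfl fun m hm => ?_
  rw [sum_comm]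
  refine sum_congr rfl fun n hn => ?_
  rw [mem_range] at hm hn
  have hmn : ∑ l ∈ range (m + n + 1), Ccoef l m n * a m * a n / c ^ l * wickPoly c (2 * l) x
      = ∑ l ∈ range (2 * N + 1), Ccoef l m n * a m * a n / c ^ l * wickPoly c (2 * l) x :=
    sum_subset (range_subset_range.2 (by omega)) fun l _ hl => by
      simp [Ccoef_of_lt (by simp at hl; omega : m + n < l)]
  rw [hmn.symm, mul_mul_mul_comm, wickPoly_two_mul_mul_two_mul, mul_sum]
  refine sum_congr rfl fun l hl => ?_
  rw [mem_range] at hl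
  have hpow : c ^ (m + n - l) * c ^ l = c ^ m * c ^ n := by
    rw [← pow_add, ← pow_add, Nat.sub_add_cancel (by omega)]
  field_simp
  linear_combination (-Ccoef l m n * a m * a n * wickPoly c (2 * l) x) * hpow

theorem wickPoly_add (c d : ℝ) (p : ℕ) (x : ℝ) :
    wickPoly (c + d) p x
      = ∑ k ∈ range (p + 1), (-c) ^ k * wickCoeff p k * wickPoly d (p - 2 * k) x := by
  set g : ℕ → ℕ → ℝ := fun k s =>
    (-c) ^ k * (-d) ^ s * ((k + s).choose k * wickCoeff p (k + s)) * x ^ (p - 2 * (k + s))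
  calc wickPoly (c + d) p x
      = ∑ r ∈ range (p + 1), ∑ k ∈ range (r + 1), g k (r - k) := by
        refine sum_congr rfl fun r _ => ?_
        rw [show -(c + d) = -c + -d by ring, add_pow, sum_mul, sum_mul]
        refine sum_congr rfl fun k hk => ?_
        simp only [g, show k + (r - k) = r by simp at hk; omega]
        ring
    _ = ∑ k ∈ range (p + 1), ∑ s ∈ range (p + 1 - k), g k s := sum_range_diag_flip _ g
    _ = _ := sum_congr rfl fun k hk => by
        rw [mem_range] at hk
        rw [eventually_constant_sum (N := p - 2 * k + 1) (fun s hs => by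
            simp [g, wickCoeff_of_lt (by omega : p < 2 * (k + s))]) (by omega),
          wickPoly, mul_sum]
        refine sum_congr rfl fun s _ => ?_
        have hcoeff : (wickCoeff p k * wickCoeff (p - 2 * k) s : ℝ)
            = (k + s).choose k * wickCoeff p (k + s) := by
          exact_mod_cast wickCoeff_mul_wickCoeff p k s
        simp only [g, Nat.sub_sub, ← mul_add]
        linear_combination (-((-c) ^ k * (-d) ^ s * x ^ (p - 2 * (k + s)))) * hcoeff

lemma exp_neg_sq_div (γ ζ : ℝ) : exp (-ζ ^ 2 / (2 * γ)) = exp (-(2 * γ)⁻¹ * ζ ^ 2) := by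
  ring_nf

lemma integrable_pow_mul_exp_neg_sq_div {γ : ℝ} (hγ : 0 < γ) (n : ℕ) :
    Integrable fun ζ : ℝ => ζ ^ n * exp (-ζ ^ 2 / (2 * γ)) := by
  convert integrable_rpow_mul_exp_neg_mul_sq (b := (2 * γ)⁻¹) (by positivity)
    (neg_one_lt_zero.trans_le n.cast_nonneg) using 2 with ζ
  rw [exp_neg_sq_div, Real.rpow_natCast]

lemma integral_pow_mul_exp_neg_sq_div_odd (γ : ℝ) (k : ℕ) :
    ∫ ζ : ℝ, ζ ^ (2 * k + 1) * exp (-ζ ^ 2 / (2 * γ)) = 0 := by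
  have hodd : ∫ ζ : ℝ, ζ ^ (2 * k + 1) * exp (-ζ ^ 2 / (2 * γ))
      = -∫ ζ : ℝ, ζ ^ (2 * k + 1) * exp (-ζ ^ 2 / (2 * γ)) := by
    nth_rw 1 [← integral_neg_eq_self]
    rw [← integral_neg]
    congr 1 with ζ
    rw [pow_succ, pow_mul, neg_sq]
    ring
  linarith

lemma integral_pow_mul_exp_neg_sq_div_even {γ : ℝ} (hγ : 0 < γ) (k : ℕ) :
    ∫ ζ : ℝ, ζ ^ (2 * k) * exp (-ζ ^ 2 / (2 * γ)) = √(2 * π * γ) * γ ^ k * (2 * k - 1)‼ := by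
  set b := (2 * γ)⁻¹
  have hb : 0 < b := by positivity
  have hhalf : ∫ ζ in Set.Ioi (0 : ℝ), ζ ^ (2 * k) * exp (-ζ ^ 2 / (2 * γ))
      = b ^ (-(k : ℝ) - 1 / 2) * (1 / 2) * Real.Gamma (k + 1 / 2) := by
    have := integral_rpow_mul_exp_neg_mul_rpow (p := 2) (q := (2 * k : ℕ)) two_pos
      (neg_one_lt_zero.trans_le (Nat.cast_nonneg _)) hb
    simp only [Real.rpow_natCast, Real.rpow_two] at this
    rw [setIntegral_congr_fun measurableSet_Ioi fun ζ _ => by rw [exp_neg_sq_div], this]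
    push_cast
    ring_nf
  have hsym : ∫ ζ : ℝ, ζ ^ (2 * k) * exp (-ζ ^ 2 / (2 * γ))
      = 2 * ∫ ζ in Set.Ioi (0 : ℝ), ζ ^ (2 * k) * exp (-ζ ^ 2 / (2 * γ)) := by
    rw [← integral_comp_abs]
    simp only [pow_mul, sq_abs]
  have hpow : b ^ (-(k : ℝ) - 1 / 2) = (2 * γ) ^ k * √(2 * γ) := by
    rw [show -(k : ℝ) - 1 / 2 = -((k : ℝ) + 1 / 2) by ring, Real.rpow_neg hb.le, Real.inv_rpow
      (by positivity), inv_inv, Real.rpow_add (by positivity), Real.rpow_natCast,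
      Real.sqrt_eq_rpow]
  rw [hsym, hhalf, hpow, Real.Gamma_nat_add_half, show 2 * π * γ = π * (2 * γ) by ring,
    Real.sqrt_mul pi_pos.le, mul_pow]
  field_simp

lemma sum_range_two_mul_of_odd_eq_zero (f : ℕ → ℝ) (n : ℕ) (h : ∀ j, f (2 * j + 1) = 0) :
    ∑ i ∈ range (2 * n), f i = ∑ j ∈ range n, f (2 * j) := by
  induction n with
  | zero => simp
  | succ n ih => rw [mul_add_one, sum_range_succ, sum_range_succ, ih, h, add_zero, sum_range_succ]

lemma exp_mul_add_pow (γ x ζ : ℝ) (m : ℕ) :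
    exp (-ζ ^ 2 / (2 * γ)) * (ζ + x) ^ m
      = ∑ i ∈ range (m + 1), (m.choose i * x ^ (m - i)) * (ζ ^ i * exp (-ζ ^ 2 / (2 * γ))) := by
  rw [add_pow, mul_sum]
  refine sum_congr rfl fun i _ => ?_
  ring

lemma integrable_exp_mul_add_pow {γ : ℝ} (hγ : 0 < γ) (x : ℝ) (m : ℕ) :
    Integrable fun ζ : ℝ => exp (-ζ ^ 2 / (2 * γ)) * (ζ + x) ^ m := by
  simp_rw [exp_mul_add_pow]
  exact integrable_finsetSum _ fun i _ => (integrable_pow_mul_exp_neg_sq_div hγ i).const_mul _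

theorem integral_exp_mul_add_pow {γ : ℝ} (hγ : 0 < γ) (x : ℝ) (m : ℕ) :
    ∫ ζ : ℝ, exp (-ζ ^ 2 / (2 * γ)) * (ζ + x) ^ m = √(2 * π * γ) * wickPoly (-γ) m x := by
  set f : ℕ → ℝ := fun i => (m.choose i * x ^ (m - i)) * ∫ ζ : ℝ, ζ ^ i * exp (-ζ ^ 2 / (2 * γ))
  calc ∫ ζ : ℝ, exp (-ζ ^ 2 / (2 * γ)) * (ζ + x) ^ m
      = ∑ i ∈ range (m + 1), f i := by
        simp_rw [exp_mul_add_pow]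
        rw [integral_finsetSum _ fun i _ => (integrable_pow_mul_exp_neg_sq_div hγ i).const_mul _]
        simp only [integral_const_mul, f]
    _ = ∑ i ∈ range (2 * (m + 1)), f i :=
        (eventually_constant_sum (fun i hi => by simp [f, Nat.choose_eq_zero_of_lt hi])
          (by omega)).symm
    _ = ∑ j ∈ range (m + 1), f (2 * j) :=
        sum_range_two_mul_of_odd_eq_zero f _ fun j => by
          simp [f, integral_pow_mul_exp_neg_sq_div_odd]
    _ = _ := by
        rw [wickPoly, mul_sum]
        refine sum_congr rfl fun j _ => ?_
        simp only [f, integral_pow_mul_exp_neg_sq_div_even hγ, wickCoeff, neg_neg]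
        push_cast
        ring

lemma exp_mul_wickPoly (γ c x ζ : ℝ) (p : ℕ) :
    exp (-ζ ^ 2 / (2 * γ)) * wickPoly c p (ζ + x)
      = ∑ k ∈ range (p + 1),
          (-c) ^ k * wickCoeff p k * (exp (-ζ ^ 2 / (2 * γ)) * (ζ + x) ^ (p - 2 * k)) := by
  rw [wickPoly, mul_sum]
  refine sum_congr rfl fun k _ => ?_
  ring

lemma integrable_exp_mul_wickPoly {γ : ℝ} (hγ : 0 < γ) (c x : ℝ) (p : ℕ) :
    Integrable fun ζ : ℝ => exp (-ζ ^ 2 / (2 * γ)) * wickPoly c p (ζ + x) := by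
  simp_rw [exp_mul_wickPoly]
  exact integrable_finsetSum _ fun k _ => (integrable_exp_mul_add_pow hγ x _).const_mul _

theorem integral_exp_mul_wickPoly {γ : ℝ} (hγ : 0 < γ) (c x : ℝ) (p : ℕ) :
    ∫ ζ : ℝ, exp (-ζ ^ 2 / (2 * γ)) * wickPoly c p (ζ + x)
      = √(2 * π * γ) * wickPoly (c - γ) p x := by
  simp_rw [exp_mul_wickPoly]
  rw [integral_finsetSum _ fun k _ => (integrable_exp_mul_add_pow hγ x _).const_mul _,
    sub_eq_add_neg, wickPoly_add, mul_sum]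
  refine sum_congr rfl fun k _ => ?_
  rw [integral_const_mul, integral_exp_mul_add_pow hγ]
  ring

end

theorem integral_exp_mul_wickPoly_add_mul {β γ c : ℝ} (hγ : 0 < γ) (hc : c - γ = c * β ^ 2)
    (n : ℕ) (x : ℝ) :
    (2 * π * γ) ^ (-(1 : ℝ) / 2) * ∫ ζ : ℝ, exp (-ζ ^ 2 / (2 * γ)) * wickPoly c n (ζ + β * x)
      = β ^ n * wickPoly c n x := by
  have hnorm : (2 * π * γ) ^ (-(1 : ℝ) / 2) * √(2 * π * γ) = 1 := by
    rw [Real.sqrt_eq_rpow, ← Real.rpow_add (by positivity)]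
    norm_num
  rw [integral_exp_mul_wickPoly hγ, hc, wickPoly_mul_sq_mul, ← mul_assoc, hnorm, one_mul]

/-- Under the hierarchical RG with `L^d = 2`, `F'(φ) = ∫ dμ_γ(ζ) F(ζ+βφ)²`, the Wick
expansion coefficients `a_l` of `F(φ) = Σ_l (a_l/γ̄^l) :φ^{2l}:_{γ̄}` (with
`γ̄ = γ/(1-β²)`) transform as `a'_l = β^{2l} Σ_{m,n} C_l^{mn} a_m a_n`. -/
theorem stmt4 (β γ : ℝ) (hβ0 : 0 < β) (hβ1 : β < 1) (hγ : 0 < γ)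
    (gb : ℝ) (hgb : gb = γ / (1 - β ^ 2))
    (N : ℕ) (a : ℕ → ℝ) (F : ℝ → ℝ)
    (hF : ∀ φ : ℝ, F φ = ∑ l ∈ range (N + 1), (a l / gb ^ l) * wick gb (2 * l) φ) :
    ∀ φ : ℝ,
      (2 * π * γ) ^ (-(1 : ℝ) / 2) *
        ∫ ζ : ℝ, exp (-ζ ^ 2 / (2 * γ)) * (F (ζ + β * φ)) ^ 2
      = ∑ l ∈ range (2 * N + 1),
          ((β ^ (2 * l) *
              ∑ m ∈ range (N + 1), ∑ n ∈ range (N + 1), Ccoef l m n * a m * a n) /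
            gb ^ l) * wick gb (2 * l) φ := by
  intro φ
  have hβ2 : 0 < 1 - β ^ 2 := by nlinarith
  have hgb0 : 0 < gb := hgb ▸ div_pos hγ hβ2
  have hvar : gb - γ = gb * β ^ 2 := by
    rw [hgb]
    field_simp
    ring
  set b : ℕ → ℝ := fun l =>
    (∑ m ∈ range (N + 1), ∑ n ∈ range (N + 1), Ccoef l m n * a m * a n) / gb ^ l
  have hF2 : ∀ y, F y ^ 2 = ∑ l ∈ range (2 * N + 1), b l * wickPoly gb (2 * l) y := fun y => by
    simp_rw [hF, wick_eq_wickPoly hgb0]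
    exact sq_sum_wickPoly_two_mul hgb0.ne' N a y
  have hintegrand : ∀ ζ, exp (-ζ ^ 2 / (2 * γ)) * F (ζ + β * φ) ^ 2
      = ∑ l ∈ range (2 * N + 1), b l * (exp (-ζ ^ 2 / (2 * γ)) * wickPoly gb (2 * l) (ζ + β * φ)) :=
    fun ζ => by
      rw [hF2, mul_sum]
      exact sum_congr rfl fun l _ => mul_left_comm _ _ _
  simp_rw [hintegrand]
  rw [integral_finsetSum _ fun l _ => (integrable_exp_mul_wickPoly hγ _ _ _).const_mul _, mul_sum]
  refine sum_congr rfl fun l _ => ?_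
  rw [integral_const_mul, mul_left_comm, integral_exp_mul_wickPoly_add_mul hγ hvar,
    wick_eq_wickPoly hgb0]
  simp only [b]
  ring
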